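/- arXiv:2604.15164 — 6 statements merged into one kernel-verified Lean document; each statement's English description precedes it below -/
import Mathlib

section
/- Let p > 3 be a prime number and f ≥ 1 an integer. Let n : {0,1,…,f−1} → ℤ be a function with |n(j)| ≤ 2 for all j. If the sum ∑_{j=0}^{f−1} n(j)·p^j is divisible by p^f − 1, then n(j) = 0 for all j. Likewise, if ∑_{j=0}^{f−1} n(j)·p^j is divisible by p^f + 1, then n(j) = 0 for all j. -/
/-!
Each coefficient contributes at most `2 p^j` in absolute value, so the sum is bounded by
`2 (p^f - 1) / (p - 1)`, which is smaller than `p^f - 1` once `p > 3`. A multiple of `p^f ∓ 1`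
that small must be `0`, and a vanishing expansion in base `p` whose digits are smaller than `p`
in absolute value has only zero digits: reduce modulo `p` and induct.
-/

theorem eq_zero_of_sum_mul_pow_eq_zero {p : ℤ} :
    ∀ {f : ℕ} (n : Fin f → ℤ), (∀ j, |n j| < p) →
      ∑ j : Fin f, n j * p ^ (j : ℕ) = 0 → ∀ j, n j = 0
  | 0, _, _, _ => fun j => j.elim0
  | f + 1, n, hn, hsum => by
    have hsplit : n 0 + p * ∑ j : Fin f, n j.succ * p ^ (j : ℕ) = 0 := by
      rw [Fin.sum_univ_succ] at hsum
      rw [Finset.mul_sum, ← hsum]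
      simp only [Fin.val_zero, pow_zero, mul_one, Fin.val_succ, pow_succ]
      congr 1
      exact Finset.sum_congr rfl fun j _ => by ring
    have hdigit : n 0 = 0 :=
      Int.eq_zero_of_abs_lt_dvd ⟨-∑ j : Fin f, n j.succ * p ^ (j : ℕ), by linarith⟩ (hn 0)
    have hp : p ≠ 0 := ((abs_nonneg _).trans_lt (hn 0)).ne'
    have htail : ∑ j : Fin f, n j.succ * p ^ (j : ℕ) = 0 := by
      simpa [hdigit, hp] using hsplit
    exact Fin.cases hdigit (eq_zero_of_sum_mul_pow_eq_zero _ (fun j => hn j.succ) htail)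

theorem sub_one_mul_abs_sum_mul_pow_le {p c : ℤ} (hp : 1 ≤ p) {f : ℕ} (n : Fin f → ℤ)
    (hn : ∀ j, |n j| ≤ c) :
    (p - 1) * |∑ j : Fin f, n j * p ^ (j : ℕ)| ≤ c * (p ^ f - 1) := by
  have hterm (j : Fin f) : |n j * p ^ (j : ℕ)| ≤ c * p ^ (j : ℕ) := by
    rw [abs_mul, abs_pow, abs_of_nonneg (by omega : 0 ≤ p)]
    exact mul_le_mul_of_nonneg_right (hn j) (by positivity)
  calc (p - 1) * |∑ j : Fin f, n j * p ^ (j : ℕ)|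
      ≤ (p - 1) * ∑ j : Fin f, c * p ^ (j : ℕ) :=
        mul_le_mul_of_nonneg_left
          ((Finset.abs_sum_le_sum_abs _ _).trans (Finset.sum_le_sum fun j _ => hterm j))
          (by omega)
    _ = c * (p ^ f - 1) := by
        rw [← Finset.mul_sum, Fin.sum_univ_eq_sum_range (fun j => p ^ j), ← geom_sum_mul]
        ring

theorem balanced_basep_expansion_vanishes_general
    (p f : ℕ) (hp3 : 3 < p) (hf : 1 ≤ f)
    (n : Fin f → ℤ) (hn : ∀ j, |n j| ≤ 2) :
    (((p : ℤ) ^ f - 1 ∣ ∑ j : Fin f, n j * (p : ℤ) ^ (j : ℕ)) → ∀ j, n j = 0) ∧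
    (((p : ℤ) ^ f + 1 ∣ ∑ j : Fin f, n j * (p : ℤ) ^ (j : ℕ)) → ∀ j, n j = 0) := by
  have hp : (3 : ℤ) < p := by exact_mod_cast hp3
  have hbound := sub_one_mul_abs_sum_mul_pow_le (p := p) (by omega) n hn
  have hpf : (1 : ℤ) < (p : ℤ) ^ f := one_lt_pow₀ (by omega) (by omega)
  have hlt : |∑ j : Fin f, n j * (p : ℤ) ^ (j : ℕ)| < (p : ℤ) ^ f - 1 := by nlinarith
  have hzero := eq_zero_of_sum_mul_pow_eq_zero (p := p) n fun j => (hn j).trans_lt (by omega)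
  exact ⟨fun h => hzero (Int.eq_zero_of_abs_lt_dvd h hlt),
    fun h => hzero (Int.eq_zero_of_abs_lt_dvd h (by linarith))⟩

/-- **Uniqueness of balanced base-`p` expansions modulo `p^f ∓ 1`.**
Let `p > 3` be a prime and `f ≥ 1`.  If `n : Fin f → ℤ` has `|n j| ≤ 2` for all `j`
and `∑ j, n j * p ^ j` is divisible by `p ^ f - 1` (resp. by `p ^ f + 1`),
then `n j = 0` for all `j`. -/
theorem balanced_basep_expansion_vanishes
    (p f : ℕ) (hp : Nat.Prime p) (hp3 : 3 < p) (hf : 1 ≤ f)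
    (n : Fin f → ℤ) (hn : ∀ j, |n j| ≤ 2) :
    (((p : ℤ) ^ f - 1 ∣ ∑ j : Fin f, n j * (p : ℤ) ^ (j : ℕ)) → ∀ j, n j = 0) ∧
    (((p : ℤ) ^ f + 1 ∣ ∑ j : Fin f, n j * (p : ℤ) ^ (j : ℕ)) → ∀ j, n j = 0) :=
  balanced_basep_expansion_vanishes_general p f hp3 hf n hn
end

section
/- Let W̃ := ℤ² ⋊ S₂, written as pairs (μ, w) with multiplication (μ,w)(ν,u) = (μ + w·ν, wu), where the nontrivial element s of S₂ acts on ℤ² by swapping coordinates; write t_μ := (μ, 1). For a boolean b define the subset A(b) ⊆ W̃ by A(false) := {t_{(2,1)}, t_{(1,2)}, t_{(1,2)}·(0,s)} and A(true) := {t_{(2,1)}, t_{(1,2)}·(0,s)}. Let f ≥ 1, J := {0,…,f−1}, b : J → Bool, and let Adm := {u : J → W̃ | u(j) ∈ A(b(j)) for all j}. For j ∈ J and ε ∈ {+1,−1} let τ(j,ε) : J → W̃ be the tuple equal to t_{ε·(1,−1)} at j and to the identity elsewhere (multiplication of tuples is componentwise). Then: (1) for every u ∈ Adm, j ∈ J and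 ε, the tuple u·τ(j,ε)·τ(j,ε) does NOT lie in Adm; (2) if j ≠ j′, ε, ε′ are arbitrary, and u·τ(j,ε)·τ(j′,ε′) ∈ Adm, then u·τ(j,ε) ∈ Adm and u·τ(j′,ε′) ∈ Adm. -/
/-- The extended affine Weyl group `W̃ = ℤ² ⋊ S₂`, written as pairs `(μ, w)`.
Here `S₂` is modelled by `Bool` (with `true` the nontrivial element `s`,
acting on `ℤ²` by swapping the two coordinates). -/
def TildeW : Type := (ℤ × ℤ) × Bool

namespace TildeW

/-- Multiplication `(μ, w)(ν, u) = (μ + w·ν, wu)`, where `w·ν` swaps the coordinates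
of `ν` exactly when `w = s`. -/
instance : Mul TildeW :=
  ⟨fun x y => (x.1 + (if x.2 then y.1.swap else y.1), xor x.2 y.2)⟩

/-- The translation `t_μ = (μ, 1)`. -/
def t (μ : ℤ × ℤ) : TildeW := (μ, false)

/-- The element `(0, s)`, `s` the nontrivial element of `S₂`. -/
def s : TildeW := ((0, 0), true)

/-- The subsets `A(b) ⊆ W̃`:
`A(false) = {t_(2,1), t_(1,2), t_(1,2)·(0,s)}` and `A(true) = {t_(2,1), t_(1,2)·(0,s)}`. -/
def A : Bool → Set TildeW
  | false => {t (2, 1), t (1, 2), t (1, 2) * s}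
  | true => {t (2, 1), t (1, 2) * s}

/-- The admissible set `Adm` of tuples. -/
def Adm (f : ℕ) (b : Fin f → Bool) : Set (Fin f → TildeW) :=
  {u | ∀ j, u j ∈ A (b j)}

/-- The tuple `τ(j, ε)`, equal to `t_{ε·(1,-1)}` at the component `j` and to the
identity elsewhere. -/
def τ {f : ℕ} (j : Fin f) (ε : ℤ) : Fin f → TildeW :=
  fun i => if i = j then t (ε, -ε) else t (0, 0)

end TildeW

/-
Right multiplication by `τ(j, ε)` only changes the `j`-th component, by a translation.
Hence (2) is checked componentwise, and (1) reduces to: no element of `A(b)` times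
`t_{2ε·(1,-1)}` lies in `A(b)` for `ε ≠ 0`. That holds because right multiplication by
`t_ν` shifts the translation part by `±ν`, whose first coordinate is even and nonzero,
while the translation parts in `A(false)` with equal `S₂`-part have first coordinates
differing by at most `1`.
-/

namespace TildeW

lemma ext_iff {x y : TildeW} : x = y ↔ x.1 = y.1 ∧ x.2 = y.2 := Prod.ext_iff

@[simp] lemma fst_mul (x y : TildeW) : (x * y).1 = x.1 + if x.2 then y.1.swap else y.1 := rfl

@[simp] lemma snd_mul (x y : TildeW) : (x * y).2 = xor x.2 y.2 := rfl

@[simp] lemma fst_t (μ : ℤ × ℤ) : (t μ).1 = μ := rfl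

@[simp] lemma snd_t (μ : ℤ × ℤ) : (t μ).2 = false := rfl

@[simp] lemma fst_s : s.1 = 0 := rfl

@[simp] lemma snd_s : s.2 = true := rfl

lemma mul_t_zero (x : TildeW) : x * t 0 = x := by
  rw [ext_iff]
  cases h : x.2 <;> simp [h]

lemma mul_t_mul_t (x : TildeW) (μ ν : ℤ × ℤ) : x * t μ * t ν = x * t (μ + ν) := by
  rw [ext_iff]
  cases h : x.2 <;> simp [h, add_assoc]

lemma mul_t_notMem_A {c : Bool} {x : TildeW} (hx : x ∈ A c) {ε : ℤ} (hε : ε ≠ 0) :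
    x * t (2 * ε, -(2 * ε)) ∉ A c := by
  cases c <;>
    simp only [A, Set.mem_insert_iff, Set.mem_singleton_iff] at hx ⊢ <;>
    rcases hx with rfl | rfl | rfl <;>
    simp [ext_iff, Prod.ext_iff] <;>
    omega

lemma mul_τ_apply {f : ℕ} (u : Fin f → TildeW) (j i : Fin f) (ε : ℤ) :
    (u * τ j ε) i = if i = j then u i * t (ε, -ε) else u i := by
  by_cases hij : i = j <;> simp [τ, hij, ← Prod.zero_eq_mk, mul_t_zero]

variable {f : ℕ} {b : Fin f → Bool} {u : Fin f → TildeW}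

lemma mul_τ_mul_τ_notMem_Adm (hu : u ∈ Adm f b) (j : Fin f) {ε : ℤ} (hε : ε ≠ 0) :
    u * τ j ε * τ j ε ∉ Adm f b := by
  intro h
  have hj := h j
  rw [mul_τ_apply, if_pos rfl, mul_τ_apply, if_pos rfl, mul_t_mul_t] at hj
  exact mul_t_notMem_A (hu j) hε (by simpa [two_mul] using hj)

lemma mul_τ_mul_τ_comm {j j' : Fin f} (hjj' : j ≠ j') (ε ε' : ℤ) :
    u * τ j ε * τ j' ε' = u * τ j' ε' * τ j ε := by
  funext i
  simp only [mul_τ_apply]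
  split_ifs with h h' <;> first | rfl | exact absurd (h'.symm.trans h) hjj'

lemma mul_τ_mem_Adm_of_mul_τ_mul_τ_mem {j j' : Fin f} {ε ε' : ℤ} (hu : u ∈ Adm f b)
    (hjj' : j ≠ j') (h : u * τ j ε * τ j' ε' ∈ Adm f b) : u * τ j ε ∈ Adm f b := by
  intro i
  by_cases hij : i = j
  · subst hij
    simpa only [mul_τ_apply, hjj', if_true, if_false] using h i
  · simpa only [mul_τ_apply, hij, if_false] using hu i

end TildeW

open TildeW in
theorem hypercube_general (f : ℕ) (b : Fin f → Bool) :
    (∀ u ∈ Adm f b, ∀ (j : Fin f) (ε : ℤ), (ε = 1 ∨ ε = -1) →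
        u * τ j ε * τ j ε ∉ Adm f b) ∧
    (∀ u ∈ Adm f b, ∀ (j j' : Fin f) (ε ε' : ℤ), j ≠ j' →
        (ε = 1 ∨ ε = -1) → (ε' = 1 ∨ ε' = -1) →
        u * τ j ε * τ j' ε' ∈ Adm f b →
        u * τ j ε ∈ Adm f b ∧ u * τ j' ε' ∈ Adm f b) := by
  refine ⟨fun u hu j ε hε => mul_τ_mul_τ_notMem_Adm hu j (by omega), ?_⟩
  intro u hu j j' ε ε' hjj' _ _ hmem
  exact ⟨mul_τ_mem_Adm_of_mul_τ_mul_τ_mem hu hjj' hmem,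
    mul_τ_mem_Adm_of_mul_τ_mul_τ_mem hu hjj'.symm (mul_τ_mul_τ_comm hjj' ε ε' ▸ hmem)⟩

open TildeW in
/-- **The hypercube lemma.**  (1) For `u ∈ Adm`, the tuple `u·τ(j,ε)·τ(j,ε)` never lies
in `Adm`.  (2) For `u ∈ Adm` and `j ≠ j'`, if `u·τ(j,ε)·τ(j',ε')` lies in `Adm` then so do
`u·τ(j,ε)` and `u·τ(j',ε')`. -/
theorem hypercube (f : ℕ) (hf : 1 ≤ f) (b : Fin f → Bool) :
    (∀ u ∈ Adm f b, ∀ (j : Fin f) (ε : ℤ), (ε = 1 ∨ ε = -1) →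
        u * τ j ε * τ j ε ∉ Adm f b) ∧
    (∀ u ∈ Adm f b, ∀ (j j' : Fin f) (ε ε' : ℤ), j ≠ j' →
        (ε = 1 ∨ ε = -1) → (ε' = 1 ∨ ε' = -1) →
        u * τ j ε * τ j' ε' ∈ Adm f b →
        u * τ j ε ∈ Adm f b ∧ u * τ j' ε' ∈ Adm f b) :=
  hypercube_general f b
end

section
/- Let S be a commutative local ring with maximal ideal 𝔪_S, and let p ∈ S be an element (the image of a uniformizer of a discrete valuation ring O over which S is an algebra). Let K ⊆ S be an ideal and let I, J ⊆ K be ideals of S. Call an ideal a ⊆ S p-saturated if S/a has no p-torsion, i.e. for all x ∈ S and n ≥ 0, pⁿx ∈ a implies x ∈ a. Assume I and J are p-saturated and that p ∈ I + J. Let x ∈ K and assume x ∈ (I + p·𝔪_S) ∩ (J + p·𝔪_S). Then there exists y ∈ I ∩ J such that x − y ∈ 𝔪_S·K; equivalently, the class of x in K/𝔪_S K lies in the image of I ∩ J → K/𝔪_S K. -/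
/-!
Write `p = a + b` with `a ∈ I`, `b ∈ J`, and `x = i + p m₁ = j + p m₂` with `i ∈ I`, `j ∈ J`,
`mₖ ∈ 𝔪`. Then `y = x - (a m₂ + b m₁)` equals both `i + a (m₁ - m₂) ∈ I` and
`j + b (m₂ - m₁) ∈ J`, while `x - y = m₂ a + m₁ b ∈ 𝔪 (I + J) ⊆ 𝔪 K`.
-/

/-- An ideal `a` of `S` is `p`-saturated if `S/a` has no `p`-torsion, i.e.
`pⁿ x ∈ a` implies `x ∈ a`. -/
def Ideal.PSaturated {S : Type*} [CommRing S] (p : S) (a : Ideal S) : Prop :=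
  ∀ (x : S) (n : ℕ), p ^ n * x ∈ a → x ∈ a

namespace Ideal

variable {R : Type*} [CommRing R] {I J 𝔪 : Ideal R} {p x : R}

theorem mem_sup_span_singleton_mul_iff :
    x ∈ I ⊔ span {p} * 𝔪 ↔ ∃ i ∈ I, ∃ m ∈ 𝔪, i + p * m = x := by
  simp only [Submodule.mem_sup, mem_span_singleton_mul]
  constructor
  · rintro ⟨i, hi, _, ⟨m, hm, rfl⟩, rfl⟩
    exact ⟨i, hi, m, hm, rfl⟩
  · rintro ⟨i, hi, m, hm, rfl⟩
    exact ⟨i, hi, p * m, ⟨m, hm, rfl⟩, rfl⟩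

theorem exists_mem_inf_sub_mem_mul_sup_of_mem_sup_span_singleton_mul
    (hp : p ∈ I ⊔ J) (hxI : x ∈ I ⊔ span {p} * 𝔪) (hxJ : x ∈ J ⊔ span {p} * 𝔪) :
    ∃ y ∈ I ⊓ J, x - y ∈ 𝔪 * (I ⊔ J) := by
  obtain ⟨a, ha, b, hb, rfl⟩ := Submodule.mem_sup.mp hp
  obtain ⟨i, hi, m₁, hm₁, hxi⟩ := mem_sup_span_singleton_mul_iff.mp hxI
  obtain ⟨j, hj, m₂, hm₂, hxj⟩ := mem_sup_span_singleton_mul_iff.mp hxJ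
  refine ⟨x - (a * m₂ + b * m₁), ⟨?_, ?_⟩, ?_⟩
  · have hyI : x - (a * m₂ + b * m₁) = i + a * (m₁ - m₂) := by rw [← hxi]; ring
    exact hyI ▸ I.add_mem hi (I.mul_mem_right _ ha)
  · have hyJ : x - (a * m₂ + b * m₁) = j + b * (m₂ - m₁) := by rw [← hxj]; ring
    exact hyJ ▸ J.add_mem hj (J.mul_mem_right _ hb)
  · rw [sub_sub_cancel, mul_comm a, mul_comm b]
    exact add_mem (mul_mem_mul hm₂ (mem_sup_left ha)) (mul_mem_mul hm₁ (mem_sup_right hb))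

end Ideal

theorem intersection_distortion_one_general
    {S : Type*} [CommRing S] [IsLocalRing S] (p : S)
    (K I J : Ideal S) (hIK : I ≤ K) (hJK : J ≤ K)
    (hp : p ∈ I + J)
    (x : S)
    (hxI : x ∈ I + Ideal.span {p} * IsLocalRing.maximalIdeal S)
    (hxJ : x ∈ J + Ideal.span {p} * IsLocalRing.maximalIdeal S) :
    ∃ y ∈ I ⊓ J, x - y ∈ IsLocalRing.maximalIdeal S * K := by
  obtain ⟨y, hy, hxy⟩ :=
    Ideal.exists_mem_inf_sub_mem_mul_sup_of_mem_sup_span_singleton_mul hp hxI hxJ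
  exact ⟨y, hy, Ideal.mul_mono_right (sup_le hIK hJK) hxy⟩

/-- **Intersection distortion, part (1).**  Let `S` be a commutative local ring with
maximal ideal `𝔪`, `p ∈ S`, `K` an ideal and `I, J ⊆ K` be `p`-saturated ideals with
`p ∈ I + J`.  If `x ∈ K` lies in `(I + p𝔪) ∩ (J + p𝔪)`, then there is `y ∈ I ∩ J`
with `x - y ∈ 𝔪·K`. -/
theorem intersection_distortion_one
    {S : Type*} [CommRing S] [IsLocalRing S] (p : S)
    (K I J : Ideal S) (hIK : I ≤ K) (hJK : J ≤ K)
    (hIsat : Ideal.PSaturated p I) (hJsat : Ideal.PSaturated p J)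
    (hp : p ∈ I + J)
    (x : S) (hxK : x ∈ K)
    (hxI : x ∈ I + Ideal.span {p} * IsLocalRing.maximalIdeal S)
    (hxJ : x ∈ J + Ideal.span {p} * IsLocalRing.maximalIdeal S) :
    ∃ y ∈ I ⊓ J, x - y ∈ IsLocalRing.maximalIdeal S * K :=
  intersection_distortion_one_general p K I J hIK hJK hp x hxI hxJ
end

section
/- Let S be a commutative ring and p ∈ S an element. Let I₁, I₂ be ideals of S and let x, y, α, β, γ, δ ∈ S. Assume x + pα ∈ I₁, y + pβ ∈ I₁, x + pγ ∈ I₂ and y + pδ ∈ I₂. Then (δ − β)·x + (α − γ)·y ∈ (I₁ ∩ I₂) + pS. -/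
/-!
Eliminating `x` and `y` between the two pairs of congruences with the coefficients `δ - β` and
`α - γ` produces the same correction term in both ideals, because
`(δ - β) α + (α - γ) β = (δ - β) γ + (α - γ) δ = αδ - βγ`.
Hence `(δ - β) x + (α - γ) y + p (αδ - βγ)` lies in `I₁ ∩ I₂`.
-/

namespace Ideal

variable {S : Type*} [CommRing S]

theorem linear_combination_add_mul_mem {I : Ideal S} {p x y a b : S}
    (hx : x + p * a ∈ I) (hy : y + p * b ∈ I) (u v : S) :
    u * x + v * y + p * (u * a + v * b) ∈ I := by
  have h := I.add_mem (I.mul_mem_left u hx) (I.mul_mem_left v hy)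
  rwa [show u * (x + p * a) + v * (y + p * b) = u * x + v * y + p * (u * a + v * b) by ring] at h

theorem mem_sup_span_singleton_of_add_mul_mem {I : Ideal S} {p z w : S}
    (h : z + p * w ∈ I) : z ∈ I ⊔ span {p} := by
  rw [show z = z + p * w + p * -w by ring]
  exact Submodule.add_mem_sup h (mem_span_singleton.mpr ⟨-w, rfl⟩)

end Ideal

/-- **Linear distortion.**  Let `S` be a commutative ring, `p ∈ S`, and `I₁, I₂` ideals.
If `x + pα, y + pβ ∈ I₁` and `x + pγ, y + pδ ∈ I₂`, then
`(δ - β)·x + (α - γ)·y ∈ (I₁ ∩ I₂) + pS`. -/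
theorem linear_distortion
    {S : Type*} [CommRing S] (p : S) (I₁ I₂ : Ideal S)
    (x y α β γ δ : S)
    (h₁ : x + p * α ∈ I₁) (h₂ : y + p * β ∈ I₁)
    (h₃ : x + p * γ ∈ I₂) (h₄ : y + p * δ ∈ I₂) :
    (δ - β) * x + (α - γ) * y ∈ (I₁ ⊓ I₂) + Ideal.span {p} := by
  have same_correction : (δ - β) * γ + (α - γ) * δ = (δ - β) * α + (α - γ) * β := by ring
  have h₁₂ : (δ - β) * x + (α - γ) * y + p * ((δ - β) * α + (α - γ) * β) ∈ I₁ ⊓ I₂ :=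
    ⟨Ideal.linear_combination_add_mul_mem h₁ h₂ _ _,
      same_correction ▸ Ideal.linear_combination_add_mul_mem h₃ h₄ _ _⟩
  exact Ideal.mem_sup_span_singleton_of_add_mul_mem h₁₂
end

section
/- Let O be the ring of integers of a finite unramified extension of ℚ_p, with uniformizer p. Let S := O[α₀, α₁, α₂, β₀, β₁, γ₀, γ₁, γ₂, δ₀, δ₁] be a polynomial ring, and define the ideal K₁ := (α₀ + pα₁ + p²α₂ + p³, β₀ + pβ₁, γ₀ + pγ₁ + p²γ₂, δ₀ + pδ₁ + p², β₁, α₂ + p, δ₁ + p, γ₁ + pγ₂, α₁). Let κ ∈ O with κ − 1, κ − 2 and κ − 3 units of O, and define K₂ := (α₀ + pα₁ + p²α₂ + p³, α₁ + 2pα₂ + 3p², γ₀ + pγ₁ + p²γ₂, γ₁ + 2pγ₂, γ₂β₁ − 2p(κ−1)⁻¹(κ−2)⁻¹, δ₁ + 2(κ−1)⁻¹p, α₂ + 2(1 − (κ−2)⁻¹)p, κβ₀ − 2pβ₁, κδ₀ − 2(κ−1)⁻¹p²). Then K₁ + K₂ = K₁ + pS. -/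
/-! Modulo `K₁ + pS` every variable except `γ₂` vanishes (read off the generators of `K₁` once
`p = 0`), and every generator of `K₂` lies in the ideal of `p` and those variables; so
`K₂ ⊆ K₁ + pS`. Conversely `K₁ + K₂` contains `(δ₁ + 2(κ-1)⁻¹p) - (δ₁ + p) = (3-κ)(κ-1)⁻¹ p`,
a unit multiple of `p`. -/

theorem Ideal.sup_eq_sup_span_singleton_of_le_of_mem {R : Type*} [CommSemiring R]
    {I J : Ideal R} {a : R} (hJ : J ≤ I ⊔ Ideal.span {a}) (ha : a ∈ I ⊔ J) :
    I ⊔ J = I ⊔ Ideal.span {a} :=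
  le_antisymm (sup_le le_sup_left hJ)
    (sup_le le_sup_left ((Ideal.span_singleton_le_iff_mem _).2 ha))

theorem Ideal.Quotient.mk_sup_span_singleton_self {R : Type*} [CommRing R] (I : Ideal R) (a : R) :
    Ideal.Quotient.mk (I ⊔ Ideal.span {a}) a = 0 :=
  Ideal.Quotient.eq_zero_iff_mem.2 (Ideal.mem_sup_right (Ideal.mem_span_singleton_self a))

theorem isUnit_two_mul_ringInverse_sub_one {R : Type*} [CommRing R] {κ : R}
    (hκ1 : IsUnit (κ - 1)) (hκ3 : IsUnit (κ - 3)) :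
    IsUnit (2 * Ring.inverse (κ - 1) - 1) := by
  have hmul : (κ - 1) * Ring.inverse (κ - 1) = 1 := Ring.mul_inverse_cancel _ hκ1
  have h : 2 * Ring.inverse (κ - 1) - 1 = -(κ - 3) * Ring.inverse (κ - 1) := by
    linear_combination hmul
  rw [h]
  exact hκ3.neg.mul (isUnit_ringInverse.2 hκ1)

noncomputable section

section ArmCyclicity

variable (O : Type*) [CommRing O] (p : ℕ) (κ : O)

local notation "SS" => MvPolynomial (Fin 10) O
local notation "pp" => ((p : ℕ) : SS)
local notation "CC" => (MvPolynomial.C : O → SS)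
local notation "α₀" => (MvPolynomial.X 0 : SS)
local notation "α₁" => (MvPolynomial.X 1 : SS)
local notation "α₂" => (MvPolynomial.X 2 : SS)
local notation "β₀" => (MvPolynomial.X 3 : SS)
local notation "β₁" => (MvPolynomial.X 4 : SS)
local notation "γ₀" => (MvPolynomial.X 5 : SS)
local notation "γ₁" => (MvPolynomial.X 6 : SS)
local notation "γ₂" => (MvPolynomial.X 7 : SS)
local notation "δ₀" => (MvPolynomial.X 8 : SS)
local notation "δ₁" => (MvPolynomial.X 9 : SS)

/-- The paper's `K^{(2,1)_j,τ_ũ}_{∇₁}`. -/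
def deformationIdeal₂₁ : Ideal SS :=
  Ideal.span
    {α₀ + pp * α₁ + pp ^ 2 * α₂ + pp ^ 3, β₀ + pp * β₁,
     γ₀ + pp * γ₁ + pp ^ 2 * γ₂, δ₀ + pp * δ₁ + pp ^ 2,
     β₁, α₂ + pp, δ₁ + pp, γ₁ + pp * γ₂, α₁}

/-- The paper's `K^{(3,0)_j,τ_w̃}_{∇₁}`, with `κ = κ^{τ_w̃}_j`. -/
def deformationIdeal₃₀ : Ideal SS :=
  Ideal.span
    {α₀ + pp * α₁ + pp ^ 2 * α₂ + pp ^ 3, α₁ + 2 * pp * α₂ + 3 * pp ^ 2,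
     γ₀ + pp * γ₁ + pp ^ 2 * γ₂, γ₁ + 2 * pp * γ₂,
     γ₂ * β₁ - 2 * pp * CC (Ring.inverse (κ - 1) * Ring.inverse (κ - 2)),
     δ₁ + 2 * CC (Ring.inverse (κ - 1)) * pp,
     α₂ + 2 * CC (1 - Ring.inverse (κ - 2)) * pp,
     CC κ * β₀ - 2 * pp * β₁,
     CC κ * δ₀ - 2 * CC (Ring.inverse (κ - 1)) * pp ^ 2}

theorem mk_deformationIdeal₂₁_sup_X_eq_zero {i : Fin 10} (hi : i ≠ 7) :
    Ideal.Quotient.mk (deformationIdeal₂₁ O p ⊔ Ideal.span {pp}) (MvPolynomial.X i) = 0 := by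
  have hgen := Ideal.span_le.1 (le_sup_left :
    deformationIdeal₂₁ O p ≤ deformationIdeal₂₁ O p ⊔ Ideal.span {pp})
  simp only [Set.insert_subset_iff, Set.singleton_subset_iff, SetLike.mem_coe,
    ← Ideal.Quotient.eq_zero_iff_mem, map_add, map_mul, map_pow,
    Ideal.Quotient.mk_sup_span_singleton_self, zero_mul, add_zero, ne_eq,
    OfNat.ofNat_ne_zero, not_false_eq_true, zero_pow] at hgen
  obtain ⟨hα₀, hβ₀, hγ₀, hδ₀, hβ₁, hα₂, hδ₁, hγ₁, hα₁⟩ := hgen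
  fin_cases i <;> first | assumption | exact absurd rfl hi

theorem deformationIdeal₃₀_le_deformationIdeal₂₁_sup_span :
    deformationIdeal₃₀ O p κ ≤ deformationIdeal₂₁ O p ⊔ Ideal.span {pp} := by
  have hp := Ideal.Quotient.mk_sup_span_singleton_self (deformationIdeal₂₁ O p) pp
  rw [deformationIdeal₃₀, Ideal.span_le]
  intro g hg
  rw [SetLike.mem_coe, ← Ideal.Quotient.eq_zero_iff_mem]
  simp only [Set.mem_insert_iff, Set.mem_singleton_iff] at hg
  rcases hg with rfl | rfl | rfl | rfl | rfl | rfl | rfl | rfl | rfl <;>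
    simp [hp, mk_deformationIdeal₂₁_sup_X_eq_zero]

theorem natCast_mem_deformationIdeal₂₁_sup_deformationIdeal₃₀
    (hκ1 : IsUnit (κ - 1)) (hκ3 : IsUnit (κ - 3)) :
    pp ∈ deformationIdeal₂₁ O p ⊔ deformationIdeal₃₀ O p κ := by
  have hδ₁ : δ₁ + pp ∈ deformationIdeal₂₁ O p := Ideal.subset_span (by simp)
  have hδ₁' : δ₁ + 2 * CC (Ring.inverse (κ - 1)) * pp ∈ deformationIdeal₃₀ O p κ :=
    Ideal.subset_span (by simp)
  have hdiff : (δ₁ + 2 * CC (Ring.inverse (κ - 1)) * pp) - (δ₁ + pp)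
      = CC (2 * Ring.inverse (κ - 1) - 1) * pp := by
    simp only [map_sub, map_mul, map_one, map_ofNat]
    ring
  have hmem := sub_mem (Ideal.mem_sup_right hδ₁') (Ideal.mem_sup_left hδ₁)
  rwa [hdiff, Ideal.unit_mul_mem_iff_mem _
    ((isUnit_two_mul_ringInverse_sub_one hκ1 hκ3).map MvPolynomial.C)] at hmem

theorem arm_cyclicity_t21_t12
    (hκ1 : IsUnit (κ - 1)) (hκ3 : IsUnit (κ - 3))
    (K₁ K₂ : Ideal SS)
    (hK₁ : K₁ = Ideal.span
      {α₀ + pp * α₁ + pp ^ 2 * α₂ + pp ^ 3, β₀ + pp * β₁,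
       γ₀ + pp * γ₁ + pp ^ 2 * γ₂, δ₀ + pp * δ₁ + pp ^ 2,
       β₁, α₂ + pp, δ₁ + pp, γ₁ + pp * γ₂, α₁})
    (hK₂ : K₂ = Ideal.span
      {α₀ + pp * α₁ + pp ^ 2 * α₂ + pp ^ 3, α₁ + 2 * pp * α₂ + 3 * pp ^ 2,
       γ₀ + pp * γ₁ + pp ^ 2 * γ₂, γ₁ + 2 * pp * γ₂,
       γ₂ * β₁ - 2 * pp * CC (Ring.inverse (κ - 1) * Ring.inverse (κ - 2)),
       δ₁ + 2 * CC (Ring.inverse (κ - 1)) * pp,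
       α₂ + 2 * CC (1 - Ring.inverse (κ - 2)) * pp,
       CC κ * β₀ - 2 * pp * β₁,
       CC κ * δ₀ - 2 * CC (Ring.inverse (κ - 1)) * pp ^ 2}) :
    K₁ ⊔ K₂ = K₁ ⊔ Ideal.span {pp} := by
  subst hK₁ hK₂
  exact Ideal.sup_eq_sup_span_singleton_of_le_of_mem
    (deformationIdeal₃₀_le_deformationIdeal₂₁_sup_span O p κ)
    (natCast_mem_deformationIdeal₂₁_sup_deformationIdeal₃₀ O p κ hκ1 hκ3)

end ArmCyclicity
end
end

section
/- Let O be the ring of integers of a finite unramified extension of ℚ_p, with uniformizer p. Let S := O[α₀, α₁, β₀, β₁, β₂, γ₀, γ₁, γ₂, δ₀, δ₁] be a polynomial ring, and define the ideal K₁ := (α₀, α₁ + p, β₀, β₁ + pβ₂, γ₀, γ₁ + pγ₂, δ₀, δ₁ + p, β₂γ₂ + p). Let κ ∈ O be arbitrary and define K₂ := (α₀ − p², α₁ + 2p, γ₀ − p²γ₂, γ₁ + 2pγ₂, γ₂β₂ − δ₁ + p, (κ−1)β₁ + 2pβ₂, pβ₁ + κβ₀, (κ−2)δ₁ + 2p,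 (κ−1)δ₀ + pδ₁). Then K₁ + K₂ = K₁ + pS. -/
/-!
Modulo `p` every generator of `K₂` is an `S`-multiple of a generator of `K₁` (or, for
`γ₂β₂ − δ₁ + p`, the difference of two of them), so `K₂ ⊆ K₁ + pS`; conversely
`p = (α₁ + 2p) − (α₁ + p) ∈ K₁ + K₂`.
-/

namespace Ideal

variable {R : Type*} [CommRing R]

theorem sup_eq_sup_span_singleton_of_le_of_mem_s11 {I J : Ideal R} {a : R}
    (hJ : J ≤ I ⊔ span {a}) (ha : a ∈ I ⊔ J) : I ⊔ J = I ⊔ span {a} :=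
  le_antisymm (sup_le le_sup_left hJ)
    (sup_le le_sup_left ((span_singleton_le_iff_mem _).2 ha))

theorem mem_sup_span_singleton_of_eq_add_mul {I : Ideal R} {x y a : R} (r : R)
    (hy : y ∈ I) (hx : x = y + r * a) : x ∈ I ⊔ span {a} :=
  hx ▸ add_mem (mem_sup_left hy) (mem_sup_right (mul_mem_left _ _ (mem_span_singleton_self a)))

end Ideal

section ArmCyclicity

variable (O : Type*) [CommRing O] (p : ℕ) (κ : O)

local notation "SS" => MvPolynomial (Fin 10) O
local notation "pp" => ((p : ℕ) : SS)
local notation "CC" => (MvPolynomial.C : O → SS)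
local notation "α₀" => (MvPolynomial.X 0 : SS)
local notation "α₁" => (MvPolynomial.X 1 : SS)
local notation "β₀" => (MvPolynomial.X 2 : SS)
local notation "β₁" => (MvPolynomial.X 3 : SS)
local notation "β₂" => (MvPolynomial.X 4 : SS)
local notation "γ₀" => (MvPolynomial.X 5 : SS)
local notation "γ₁" => (MvPolynomial.X 6 : SS)
local notation "γ₂" => (MvPolynomial.X 7 : SS)
local notation "δ₀" => (MvPolynomial.X 8 : SS)
local notation "δ₁" => (MvPolynomial.X 9 : SS)

theorem arm_cyclicity_t12s_t03s
    (K₁ K₂ : Ideal SS)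
    (hK₁ : K₁ = Ideal.span
      {α₀, α₁ + pp, β₀, β₁ + pp * β₂, γ₀, γ₁ + pp * γ₂, δ₀, δ₁ + pp,
       β₂ * γ₂ + pp})
    (hK₂ : K₂ = Ideal.span
      {α₀ - pp ^ 2, α₁ + 2 * pp, γ₀ - pp ^ 2 * γ₂, γ₁ + 2 * pp * γ₂,
       γ₂ * β₂ - δ₁ + pp,
       CC (κ - 1) * β₁ + 2 * pp * β₂,
       pp * β₁ + CC κ * β₀,
       CC (κ - 2) * δ₁ + 2 * pp,
       CC (κ - 1) * δ₀ + pp * δ₁}) :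
    K₁ ⊔ K₂ = K₁ ⊔ Ideal.span {pp} := by
  have gen₁ {x : SS} (hx : x ∈ ({α₀, α₁ + pp, β₀, β₁ + pp * β₂, γ₀, γ₁ + pp * γ₂,
      δ₀, δ₁ + pp, β₂ * γ₂ + pp} : Set SS)) : x ∈ K₁ := hK₁ ▸ Ideal.subset_span hx
  have gen₂ : α₁ + 2 * pp ∈ K₂ := hK₂ ▸ Ideal.subset_span (by simp)
  have of_mod_p {x : SS} (y r : SS) (hy : y ∈ K₁) (hx : x = y + r * pp) :
      x ∈ K₁ ⊔ Ideal.span {pp} :=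
    Ideal.mem_sup_span_singleton_of_eq_add_mul r hy hx
  refine Ideal.sup_eq_sup_span_singleton_of_le_of_mem_s11 ?_ ?_
  · simp only [hK₂, Ideal.span_le, Set.insert_subset_iff, Set.singleton_subset_iff,
      SetLike.mem_coe]
    refine ⟨?_, ?_, ?_, ?_, ?_, ?_, ?_, ?_, ?_⟩
    · exact of_mod_p α₀ (-pp) (gen₁ (by simp)) (by ring)
    · exact of_mod_p (α₁ + pp) 1 (gen₁ (by simp)) (by ring)
    · exact of_mod_p γ₀ (-pp * γ₂) (gen₁ (by simp)) (by ring)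
    · exact of_mod_p (γ₁ + pp * γ₂) γ₂ (gen₁ (by simp)) (by ring)
    · exact of_mod_p ((β₂ * γ₂ + pp) - (δ₁ + pp)) 1
        (sub_mem (gen₁ (by simp)) (gen₁ (by simp))) (by ring)
    · exact of_mod_p (CC (κ - 1) * (β₁ + pp * β₂)) ((2 - CC (κ - 1)) * β₂)
        (Ideal.mul_mem_left _ _ (gen₁ (by simp))) (by ring)
    · exact of_mod_p (CC κ * β₀) β₁ (Ideal.mul_mem_left _ _ (gen₁ (by simp))) (by ring)
    · exact of_mod_p (CC (κ - 2) * (δ₁ + pp)) (2 - CC (κ - 2))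
        (Ideal.mul_mem_left _ _ (gen₁ (by simp))) (by ring)
    · exact of_mod_p (CC (κ - 1) * δ₀) δ₁
        (Ideal.mul_mem_left _ _ (gen₁ (by simp))) (by ring)
  · have hp_eq : pp = (α₁ + 2 * pp) - (α₁ + pp) := by ring
    exact hp_eq ▸ sub_mem (Ideal.mem_sup_right gen₂) (Ideal.mem_sup_left (gen₁ (by simp)))

end ArmCyclicity
end
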